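/- arXiv:1311.3874 — 4 statements merged into one kernel-verified Lean document; each statement's English description precedes it below -/
import Mathlib

section
/- If r ≥ 2 integers x₁, …, xᵣ each at least 2 satisfy x₁·x₂⋯xᵣ = x₁ + ⋯ + xᵣ + (n − r) for some n ≥ r, then x₁·x₂⋯xᵣ ≤ 2n. -/
/-! For factors `≥ 1`, induction gives `1 + Σ ≤ Π + r` (each step is `(a - 1)(P - 1) ≥ 0`).
Splitting off one factor `a ≥ 2` from factors `≥ 2` with product `P ≥ 2`, the inequality
`(a - 2)(P - 2) ≥ 0` upgrades this to `2Σ ≤ Π + 2r`. Substituting `Σ = Π - (n - r)` yields `Π ≤ 2n`. -/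

open Finset

section

variable {ι R : Type*} [CommRing R] [LinearOrder R] [IsStrictOrderedRing R] {f : ι → R}

theorem Finset.one_add_sum_le_prod_add_card {s : Finset ι} (hs : s.Nonempty)
    (hf : ∀ i ∈ s, 1 ≤ f i) : 1 + ∑ i ∈ s, f i ≤ ∏ i ∈ s, f i + #s := by
  induction hs using Finset.Nonempty.cons_induction with
  | singleton a => simp [add_comm]
  | cons a t ha ht ih =>
    have hft : ∀ i ∈ t, 1 ≤ f i := fun i hi => hf i (mem_cons_of_mem hi)
    have hfa : 1 ≤ f a := hf a (mem_cons_self a t)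
    have hP : 1 ≤ ∏ i ∈ t, f i := one_le_prod hft
    have hsum := ih hft
    rw [sum_cons, prod_cons, card_cons]
    push_cast
    nlinarith [mul_nonneg (sub_nonneg.2 hfa) (sub_nonneg.2 hP)]

theorem Finset.two_mul_sum_le_prod_add_two_mul_card {s : Finset ι} (hs : 2 ≤ #s)
    (hf : ∀ i ∈ s, 2 ≤ f i) : 2 * ∑ i ∈ s, f i ≤ ∏ i ∈ s, f i + 2 * #s := by
  obtain ⟨t, a, ha, rfl⟩ := (card_pos.1 (by omega : 0 < #s)).exists_cons_eq
  rw [card_cons] at hs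
  have ht : t.Nonempty := card_pos.1 (by omega)
  have hft : ∀ i ∈ t, 2 ≤ f i := fun i hi => hf i (mem_cons_of_mem hi)
  have hfa : 2 ≤ f a := hf a (mem_cons_self a t)
  have hrest := one_add_sum_le_prod_add_card ht fun i hi => one_le_two.trans (hft i hi)
  have hsum : #t • (2 : R) ≤ ∑ i ∈ t, f i := card_nsmul_le_sum t f 2 hft
  rw [nsmul_eq_mul] at hsum
  -- `P ≥ 1 + ∑ - #t ≥ 1 + #t`
  have hP : 2 ≤ ∏ i ∈ t, f i := by
    have : (1 : R) ≤ #t := by exact_mod_cast card_pos.2 ht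
    linarith
  rw [sum_cons, prod_cons, card_cons]
  push_cast
  nlinarith [mul_nonneg (sub_nonneg.2 hfa) (sub_nonneg.2 hP)]

end

theorem esp_value_le_two_n (n r : ℕ) (hr : 2 ≤ r) (hnr : r ≤ n) (x : Fin r → ℕ)
    (hx : ∀ i, 2 ≤ x i) (h : ∏ i, x i = (∑ i, x i) + (n - r)) :
    ∏ i, x i ≤ 2 * n := by
  have hbound := two_mul_sum_le_prod_add_two_mul_card (s := univ) (f := fun i => (x i : ℤ))
    (by simpa using hr) fun i _ => by exact_mod_cast hx i
  have hZ := congrArg (Nat.cast (R := ℤ)) h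
  push_cast [Nat.cast_sub hnr] at hZ
  simp only [card_univ, Fintype.card_fin] at hbound
  have : ∏ i, (x i : ℤ) ≤ 2 * n := by linarith
  exact_mod_cast this
end

section
/- Suppose x₁, …, x_{r−1} ≥ 2 satisfy x₁⋯x_{r−1} = x₁ + ⋯ + x_{r−1} + (j + 1) for some j with r + j < n, and suppose w := (x₁ + ⋯ + x_{r−1} + n − r)/(x₁⋯x_{r−1} − 1) is a positive integer. Then w ≥ 2 and x₁⋯x_{r−1}·w = x₁ + ⋯ + x_{r−1} + w + (n − r). -/
theorem esp_recursion_converse_general (n r : ℕ) (j : ℤ) (x : Fin (r - 1) → ℤ)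
    (h : (∏ i, x i) = (∑ i, x i) + (j + 1))
    (hjn : (r : ℤ) + j < n) (w : ℤ) (hw : 0 < w)
    (hweq : w * ((∏ i, x i) - 1) = (∑ i, x i) + (n : ℤ) - r) :
    2 ≤ w ∧ (∏ i, x i) * w = (∑ i, x i) + w + ((n : ℤ) - r) := by
  refine ⟨?_, by linear_combination hweq⟩
  by_contra! hw2
  obtain rfl : w = 1 := by omega
  -- with `w = 1`, `hweq` and `h` together give `j = n - r`
  linarith

theorem esp_recursion_converse (n r : ℕ) (j : ℤ) (x : Fin (r - 1) → ℤ)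
    (hx : ∀ i, 2 ≤ x i) (h : (∏ i, x i) = (∑ i, x i) + (j + 1))
    (hjn : (r : ℤ) + j < n) (w : ℤ) (hw : 0 < w)
    (hweq : w * ((∏ i, x i) - 1) = (∑ i, x i) + (n : ℤ) - r) :
    2 ≤ w ∧ (∏ i, x i) * w = (∑ i, x i) + w + ((n : ℤ) - r) :=
  esp_recursion_converse_general n r j x h hjn w hw hweq
end

section
/- If n > 2 is an exceptional value of the ESP problem (i.e., the only n-tuple of positive integers whose sum equals its product is, up to ordering, (1, …, 1, 2, n) with n−2 ones), then n − 1 is a Sophie Germain prime: both n − 1 and 2(n − 1) + 1 = 2n − 1 are prime. -/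
/-!
A nontrivial factorisation of `n - 1` or of `2n - 1` yields a second solution of length `n`:
if `n - 1 = a * b` then `(a + 1)(b + 1) = (n - 2) + (a + 1) + (b + 1)`, and if
`2n - 1 = (2p + 1)(2q + 1)` then `2(p + 1)(q + 1) = (n - 3) + 2 + (p + 1) + (q + 1)`, so padding
with ones gives solutions of length `n`. Unlike the basic solution, neither contains the entry `n`.
-/

open Multiset

def IsESPSolution (n : ℕ) (m : Multiset ℕ) : Prop :=
  card m = n ∧ (∀ a ∈ m, 0 < a) ∧ m.prod = m.sum

def IsExceptional (n : ℕ) : Prop :=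
  ∀ m, IsESPSolution n m → m = replicate (n - 2) 1 + {2, n}

theorem IsExceptional.mem {n : ℕ} {m : Multiset ℕ} (hexc : IsExceptional n)
    (hm : IsESPSolution n m) : n ∈ m := by
  simp [hexc m hm]

theorem isESPSolution_replicate_one_add {k : ℕ} {s : Multiset ℕ} (hs : ∀ a ∈ s, 0 < a)
    (h : s.prod = s.sum + k) : IsESPSolution (k + card s) (replicate k 1 + s) := by
  refine ⟨by simp, ?_, ?_⟩
  · simp only [mem_add, mem_replicate]
    rintro a (⟨-, rfl⟩ | ha)
    exacts [Nat.one_pos, hs a ha]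
  · simp [h, add_comm]

theorem isESPSolution_of_mul_eq_sub_one {n a b : ℕ} (hn : 2 ≤ n) (hab : a * b = n - 1) :
    IsESPSolution n (replicate (n - 2) 1 + {a + 1, b + 1}) := by
  have h := isESPSolution_replicate_one_add (k := n - 2) (s := {a + 1, b + 1}) (by simp) (by
    simp only [insert_eq_cons, prod_cons, prod_singleton, sum_cons, sum_singleton]
    rw [add_one_mul, mul_add_one]
    omega)
  rwa [card_pair, Nat.sub_add_cancel hn] at h

theorem isESPSolution_of_mul_eq_two_mul_sub_one {n p q : ℕ} (hn : 3 ≤ n)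
    (hpq : (2 * p + 1) * (2 * q + 1) = 2 * n - 1) :
    IsESPSolution n (replicate (n - 3) 1 + {2, p + 1, q + 1}) := by
  have h := isESPSolution_replicate_one_add (k := n - 3) (s := {2, p + 1, q + 1}) (by simp) (by
    simp only [insert_eq_cons, prod_cons, prod_singleton, sum_cons, sum_singleton]
    ring_nf at hpq ⊢
    omega)
  rwa [insert_eq_cons, insert_eq_cons, card_cons, card_cons, card_singleton,
    Nat.sub_add_cancel hn] at h

theorem IsExceptional.prime_sub_one {n : ℕ} (hn : 2 < n) (hexc : IsExceptional n) :
    (n - 1).Prime := by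
  by_contra hp
  obtain ⟨a, b, ha, hb, hab⟩ := (Nat.not_prime_iff_exists_mul_eq (by omega)).mp hp
  have := hexc.mem (isESPSolution_of_mul_eq_sub_one hn.le hab)
  simp only [mem_add, mem_replicate, insert_eq_cons, mem_cons, mem_singleton] at this
  omega

theorem IsExceptional.prime_two_mul_sub_one {n : ℕ} (hn : 2 < n) (hexc : IsExceptional n) :
    (2 * n - 1).Prime := by
  by_contra hp
  obtain ⟨a, b, ha, hb, hab⟩ := (Nat.not_prime_iff_exists_mul_eq (by omega)).mp hp
  have hodd : Odd (a * b) := hab ▸ ⟨n - 1, by omega⟩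
  obtain ⟨⟨p, rfl⟩, ⟨q, rfl⟩⟩ := Nat.odd_mul.mp hodd
  have := hexc.mem (isESPSolution_of_mul_eq_two_mul_sub_one hn hab)
  simp only [mem_add, mem_replicate, insert_eq_cons, mem_cons, mem_singleton] at this
  omega

theorem exceptional_implies_sophie_germain (n : ℕ) (hn : 2 < n)
    (hexc : ∀ m : Multiset ℕ, Multiset.card m = n → (∀ a ∈ m, 0 < a) →
      m.prod = m.sum → m = Multiset.replicate (n - 2) 1 + {2, n}) :
    Nat.Prime (n - 1) ∧ Nat.Prime (2 * n - 1) := by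
  have hexc : IsExceptional n := fun m ⟨hcard, hpos, hsum⟩ => hexc m hcard hpos hsum
  exact ⟨hexc.prime_sub_one hn, hexc.prime_two_mul_sub_one hn⟩
end

section
/- For any integer n > 2, if the only solution (x₁, x₂) with 2 ≤ x₁ ≤ x₂ of x₁·x₂ = x₁ + x₂ + (n − 2) is (2, n), and if additionally no triple (x₁, x₂, x₃) with 2 ≤ x₁ ≤ x₂ ≤ x₃ satisfies x₁·x₂·x₃ = x₁ + x₂ + x₃ + (n − 3), then for every j with −1 ≤ j ≤ ⌊(n−7)/2⌋, (2j + 5) does not divide (j + 2 + n). -/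
/-!
If `(2j + 5) w = j + 2 + n`, then with `a = j + 3` this reads `2·a·w = 2 + a + w + (n - 3)`,
so `(2, a, w)`, once sorted, is a triple excluded by hypothesis; here `a ≥ 2` and `w ≥ 2`,
the latter because `2j + 5 < j + 2 + n`.
-/

theorem one_lt_of_mul_eq_of_lt {α : Type*} [Semiring α] [LinearOrder α] [IsStrictOrderedRing α]
    {d m w : α} (hd : 0 ≤ d) (hdm : d < m) (h : d * w = m) : 1 < w :=
  lt_of_mul_lt_mul_left (by rwa [mul_one, h]) hd

theorem exists_sorted_triple_of_two_mul_mul_eq {k y z : ℕ} (hy : 2 ≤ y) (hz : 2 ≤ z)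
    (h : 2 * y * z = 2 + y + z + k) :
    ∃ x₁ x₂ x₃ : ℕ, 2 ≤ x₁ ∧ x₁ ≤ x₂ ∧ x₂ ≤ x₃ ∧ x₁ * x₂ * x₃ = x₁ + x₂ + x₃ + k := by
  refine ⟨2, min y z, max y z, le_rfl, le_min hy hz, min_le_max, ?_⟩
  rcases le_total y z with hyz | hzy
  · simpa [hyz] using h
  · simp only [min_eq_right hzy, max_eq_left hzy]
    linarith

theorem exceptional_divisibility_obstruction_general (n : ℕ)
    (h3 : ¬ ∃ x₁ x₂ x₃ : ℕ, 2 ≤ x₁ ∧ x₁ ≤ x₂ ∧ x₂ ≤ x₃ ∧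
      x₁ * x₂ * x₃ = x₁ + x₂ + x₃ + (n - 3)) :
    ∀ j : ℤ, -1 ≤ j → 2 * j ≤ (n : ℤ) - 7 → ¬ (2 * j + 5) ∣ (j + 2 + (n : ℤ)) := by
  rintro j hj hjn ⟨w, hw⟩
  have hw1 : 1 < w := one_lt_of_mul_eq_of_lt (by omega) (by omega) hw.symm
  obtain ⟨a, rfl⟩ : ∃ a : ℕ, j = a - 3 := ⟨(j + 3).toNat, by omega⟩
  lift w to ℕ using by omega
  have hn : 3 ≤ n := by omega
  refine h3 (exists_sorted_triple_of_two_mul_mul_eq (y := a) (z := w) (by omega) (by omega) ?_)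
  zify [hn]
  linear_combination -hw

theorem exceptional_divisibility_obstruction (n : ℕ) (hn : 2 < n)
    (h2 : ∀ x₁ x₂ : ℕ, 2 ≤ x₁ → x₁ ≤ x₂ → x₁ * x₂ = x₁ + x₂ + (n - 2) →
      x₁ = 2 ∧ x₂ = n)
    (h3 : ¬ ∃ x₁ x₂ x₃ : ℕ, 2 ≤ x₁ ∧ x₁ ≤ x₂ ∧ x₂ ≤ x₃ ∧
      x₁ * x₂ * x₃ = x₁ + x₂ + x₃ + (n - 3)) :
    ∀ j : ℤ, -1 ≤ j → 2 * j ≤ (n : ℤ) - 7 → ¬ (2 * j + 5) ∣ (j + 2 + (n : ℤ)) :=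
  exceptional_divisibility_obstruction_general n h3
end
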